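/- Let k⟨X⟩ be graded by a set map e: X → N^s∖{0}, let 𝔞 be a homogeneous ideal, A = k⟨X⟩/𝔞, G ⊆ 𝔞 a homogeneous set, and R = k⟨X⟩/(lw(G)). Then for any α ∈ N^s, the set of words of degree β that are normal modulo G forms a k-basis of A_β for every β ≤ α if and only if dim_k A_β = dim_k R_β for every β ≤ α. -/

import Mathlib

namespace NC

/-- The free associative algebra on the alphabet `X`, with the words (the free
monoid on `X`) as a basis. -/
abbrev FA (k X : Type) [Field k] := MonoidAlgebra k (FreeMonoid X)

variable {k X : Type} [Field k]

/-- The monomial on a word `u` (with coefficient `1`). -/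
noncomputable def mono (k : Type) [Field k] {X : Type} (u : FreeMonoid X) : FA k X :=
  MonoidAlgebra.of k (FreeMonoid X) u

/-- `u` is a factor of `v`. -/
def IsFactor (u v : FreeMonoid X) : Prop := ∃ w₁ w₂ : FreeMonoid X, w₁ * u * w₂ = v

/-- The leading word of a polynomial (junk value `1` for the zero polynomial). -/
noncomputable def lw [LinearOrder (FreeMonoid X)] (f : FA k X) : FreeMonoid X :=
  f.coeff.support.max.unbotD 1

/-- The set of leading words of the nonzero members of `G`. -/
def lwSet [LinearOrder (FreeMonoid X)] (G : Set (FA k X)) : Set (FreeMonoid X) :=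
  {u | ∃ f ∈ G, f ≠ 0 ∧ lw f = u}

/-- The normal words modulo `G` : words having no factor among the leading words of `G`. -/
def nw [LinearOrder (FreeMonoid X)] (G : Set (FA k X)) : Set (FreeMonoid X) :=
  {u | ∀ v ∈ lwSet G, ¬ IsFactor v u}

/-- The two-sided ideal (as a `k`-submodule) generated by a set `S`. -/
noncomputable def ideal2 (k : Type) [Field k] {X : Type} (S : Set (FA k X)) : Submodule k (FA k X) :=
  Submodule.span k {x | ∃ a s b, s ∈ S ∧ x = a * s * b}

/-- A `k`-submodule of the free algebra which is a two-sided ideal. -/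
def IsTwoSided (𝔞 : Submodule k (FA k X)) : Prop :=
  ∀ a x : FA k X, x ∈ 𝔞 → a * x ∈ 𝔞 ∧ x * a ∈ 𝔞

/-- `G` is a Gröbner basis of the (two-sided) ideal `𝔞`. -/
def IsGrobner [LinearOrder (FreeMonoid X)] (𝔞 : Submodule k (FA k X))
    (G : Set (FA k X)) : Prop :=
  (∀ g ∈ G, g ∈ 𝔞) ∧ ∀ f ∈ 𝔞, f ≠ 0 → lw f ∉ nw G

/-- `G` is reduced: every member is monic and normal modulo the remaining members. -/
def IsReducedGB [LinearOrder (FreeMonoid X)] (G : Set (FA k X)) : Prop :=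
  ∀ f ∈ G, f.coeff (lw f) = 1 ∧ ∀ u ∈ f.coeff.support, u ∈ nw (G \ {f})

/-- The fixed linear order on words is admissible. -/
def IsAdmissible (X : Type) [LinearOrder (FreeMonoid X)] : Prop :=
  WellFoundedLT (FreeMonoid X) ∧ (∀ u : FreeMonoid X, u ≠ 1 → 1 < u) ∧
    ∀ u v w₁ w₂ : FreeMonoid X, u < v → w₁ * u * w₂ < w₁ * v * w₂

end NC

namespace NC2
open NC
variable {k X : Type} [Field k]

/-- The (multi)degree of a word, for the grading determined by `e` on the letters. -/
def mdeg {σ : Type} [AddCommMonoid σ] (e : X → σ) (w : FreeMonoid X) : σ :=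
  ((FreeMonoid.toList w).map e).sum

/-- `f` is homogeneous of degree `α`. -/
def IsHomog {σ : Type} [AddCommMonoid σ] (e : X → σ) (α : σ) (f : NC.FA k X) : Prop :=
  ∀ u ∈ f.coeff.support, mdeg e u = α

open Classical in
/-- The degree-`α` homogeneous component of `f`. -/
noncomputable def homComp {σ : Type} [AddCommMonoid σ] (e : X → σ) (α : σ) (f : NC.FA k X) :
    NC.FA k X :=
  MonoidAlgebra.ofCoeff (Finsupp.filter (fun u => mdeg e u = α) f.coeff)

/-- A homogeneous (two-sided) ideal. -/
def IsHomogIdeal {σ : Type} [AddCommMonoid σ] (e : X → σ) (𝔞 : Submodule k (NC.FA k X)) : Prop :=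
  NC.IsTwoSided 𝔞 ∧ ∀ f ∈ 𝔞, ∀ α : σ, homComp e α f ∈ 𝔞

/-- Polynomials supported on a given set of words. -/
noncomputable def wsupported (k : Type) [Field k] {X : Type} (S : Set (FreeMonoid X)) :
    Submodule k (NC.FA k X) :=
  MonoidAlgebra.supported k k S

/-- Dimension of the image, in the quotient by `𝔞`, of the span of the words in `S`. -/
noncomputable def hilbS (𝔞 : Submodule k (NC.FA k X)) (S : Set (FreeMonoid X)) : ℕ :=
  Module.finrank k ↥((wsupported k S).map 𝔞.mkQ)

/-- The multigraded Hilbert function of the quotient algebra `k⟨X⟩/𝔞`. -/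
noncomputable def hilb {σ : Type} [AddCommMonoid σ] (e : X → σ) (𝔞 : Submodule k (NC.FA k X))
    (α : σ) : ℕ :=
  hilbS 𝔞 {u | mdeg e u = α}

/-- The monomial ideal on a set of words. -/
noncomputable def monIdeal (k : Type) [Field k] {X : Type} (V : Set (FreeMonoid X)) :
    Submodule k (NC.FA k X) :=
  NC.ideal2 k ((fun u => NC.mono k u) '' V)

/-- Partial sums of a Hilbert function. -/
def psum (H : ℕ → ℕ) (n : ℕ) : ℕ := ∑ i ∈ Finset.range (n + 1), H i

/-- The growth function is bounded by a polynomial of degree `d`. -/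
def PolyBoundedBy (H : ℕ → ℕ) (d : ℕ) : Prop := ∃ C : ℕ, ∀ n, psum H n ≤ C * (n + 1) ^ d

/-- Polynomial growth (of some degree). -/
def PolyGrowth (H : ℕ → ℕ) : Prop := ∃ d, PolyBoundedBy H d

/-- Polynomial growth of degree exactly `d`. -/
def PolyGrowthDeg (H : ℕ → ℕ) (d : ℕ) : Prop :=
  ∃ C : ℕ, 0 < C ∧ ∀ n, psum H n ≤ C * (n + 1) ^ d ∧ (n + 1) ^ d ≤ C * psum H n

/-- Gelfand-Kirillov dimension of a graded algebra with Hilbert function `H`, as an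
extended natural number. -/
noncomputable def gkdimH (H : ℕ → ℕ) : ℕ∞ :=
  sInf ((fun d : ℕ => (d : ℕ∞)) '' {d | PolyBoundedBy H d})

end NC2

/-!
If a word `u` contains the leading word of some `g ∈ G` as a factor, `u = w₁ * lw g * w₂`,
then modulo `𝔞` the monomial `u` equals `u - c⁻¹ • w₁ g w₂`, where `c` is the leading
coefficient of `g`; this is a combination of words that are smaller (by admissibility) and
of the same degree (by homogeneity of `g`). Well-founded induction shows that the normal
words of degree `β` span `A_β`, and likewise `R_β`. In `R` they are moreover independent,
since the monomial ideal is supported on non-normal words; so `dim R_β` is the number of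
normal words of degree `β`, and a finite spanning family of `A_β` is a basis exactly when
its size is `dim A_β`.
-/

namespace NC

variable {k X : Type} [Field k]

theorem mono_eq_single (u : FreeMonoid X) : mono k u = MonoidAlgebra.single u (1 : k) := rfl

@[simp]
theorem support_coeff_mono (u : FreeMonoid X) : (mono k u).coeff.support = {u} :=
  Finsupp.support_single _ one_ne_zero

theorem mono_ne_zero (u : FreeMonoid X) : mono k u ≠ 0 := by
  simp [← MonoidAlgebra.coeff_eq_zero, ← Finsupp.support_eq_empty]

theorem support_coeff_mono_mul_mul_subset [DecidableEq (FreeMonoid X)] (f : FA k X)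
    (w₁ w₂ : FreeMonoid X) :
    (mono k w₁ * f * mono k w₂).coeff.support ⊆ f.coeff.support.image (w₁ * · * w₂) := by
  refine (MonoidAlgebra.support_coeff_mul_single_subset _ _ _).trans ?_
  intro y hy
  obtain ⟨z, hz, rfl⟩ := Finset.mem_image.1 hy
  obtain ⟨u, hu, rfl⟩ :=
    Finset.mem_image.1 (MonoidAlgebra.support_coeff_single_mul_subset _ _ _ hz)
  exact Finset.mem_image_of_mem _ hu

theorem isTwoSided_ideal2 (S : Set (FA k X)) : IsTwoSided (ideal2 k S) := by
  intro a x hx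
  have hleft : ideal2 k S ≤ (ideal2 k S).comap (LinearMap.mulLeft k a) := by
    refine Submodule.span_le.2 ?_
    rintro _ ⟨p, s, q, hs, rfl⟩
    rw [SetLike.mem_coe, Submodule.mem_comap, LinearMap.mulLeft_apply]
    exact Submodule.subset_span ⟨a * p, s, q, hs, by simp only [mul_assoc]⟩
  have hright : ideal2 k S ≤ (ideal2 k S).comap (LinearMap.mulRight k a) := by
    refine Submodule.span_le.2 ?_
    rintro _ ⟨p, s, q, hs, rfl⟩
    rw [SetLike.mem_coe, Submodule.mem_comap, LinearMap.mulRight_apply]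
    exact Submodule.subset_span ⟨p, s, q * a, hs, by simp only [mul_assoc]⟩
  exact ⟨hleft hx, hright hx⟩

section LeadingWord

variable [LinearOrder (FreeMonoid X)]

theorem le_lw {f : FA k X} {u : FreeMonoid X} (hu : u ∈ f.coeff.support) : u ≤ lw f := by
  obtain ⟨m, hm⟩ := Finset.max_of_mem hu
  rw [lw, hm, WithBot.unbotD_coe]
  exact WithBot.coe_le_coe.1 (hm ▸ Finset.le_max hu)

theorem lw_mem_support {f : FA k X} (hf : f ≠ 0) : lw f ∈ f.coeff.support := by
  obtain ⟨u, hu⟩ := Finsupp.support_nonempty_iff.2 (mt MonoidAlgebra.coeff_eq_zero.1 hf)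
  obtain ⟨m, hm⟩ := Finset.max_of_mem hu
  rw [lw, hm, WithBot.unbotD_coe]
  exact Finset.mem_of_max hm

@[simp]
theorem lw_mono (u : FreeMonoid X) : lw (mono k u) = u := by
  rw [lw, support_coeff_mono, Finset.max_singleton, WithBot.unbotD_coe]

@[simp]
theorem lwSet_image_mono (V : Set (FreeMonoid X)) : lwSet ((mono k ·) '' V) = V := by
  ext u
  simp [lwSet, mono_ne_zero]

end LeadingWord

end NC

namespace NC2

open NC

variable {k X : Type} [Field k]

theorem mdeg_mul {σ : Type} [AddCommMonoid σ] (e : X → σ) (u v : FreeMonoid X) :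
    mdeg e (u * v) = mdeg e u + mdeg e v := by
  simp [mdeg, FreeMonoid.toList_mul]

theorem isHomog_mono {σ : Type} [AddCommMonoid σ] (e : X → σ) (u : FreeMonoid X) :
    IsHomog e (mdeg e u) (mono k u) := by
  simp [IsHomog]

theorem finite_setOf_mdeg_eq [Finite X] {ι : Type} [Fintype ι] (e : X → ι → ℕ)
    (he : ∀ x, e x ≠ 0) (β : ι → ℕ) : {u : FreeMonoid X | mdeg e u = β}.Finite := by
  have hlen : ∀ l : List X, l.length ≤ ∑ i, (l.map e).sum i := by
    intro l
    induction l with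
    | nil => simp
    | cons a t ih =>
      obtain ⟨i, hi⟩ := Function.ne_iff.1 (he a)
      have : 1 ≤ ∑ i, e a i :=
        (Nat.one_le_iff_ne_zero.2 hi).trans (Finset.single_le_sum (by simp) (Finset.mem_univ i))
      simp only [List.map_cons, List.sum_cons, List.length_cons, Pi.add_apply,
        Finset.sum_add_distrib]
      omega
  refine ((List.finite_length_le X (∑ i, β i)).preimage
    FreeMonoid.toList.injective.injOn).subset fun u (hu : mdeg e u = β) => ?_
  rw [Set.mem_preimage, Set.mem_ofPred_eq, ← hu]
  exact hlen u.toList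

theorem map_wsupported_le_iff {M : Type} [AddCommGroup M] [Module k M] (φ : FA k X →ₗ[k] M)
    (T : Set (FreeMonoid X)) (N : Submodule k M) :
    (wsupported k T).map φ ≤ N ↔ ∀ u ∈ T, φ (mono k u) ∈ N := by
  rw [wsupported, MonoidAlgebra.supported_eq_span_single, Submodule.map_span, Submodule.span_le,
    ← Set.image_comp, Set.image_subset_iff]
  rfl

theorem mono_mem_wsupported {u : FreeMonoid X} {T : Set (FreeMonoid X)} (hu : u ∈ T) :
    mono k u ∈ wsupported k T := by
  simpa [wsupported, MonoidAlgebra.mem_supported] using hu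

theorem disjoint_wsupported {S T : Set (FreeMonoid X)} (h : Disjoint S T) :
    Disjoint (wsupported k S) (wsupported k T) := by
  refine Submodule.disjoint_def.2 fun x hS hT => ?_
  rw [← MonoidAlgebra.coeff_eq_zero, ← Finsupp.support_eq_empty, ← Finset.coe_eq_empty]
  exact disjoint_self.1 (h.mono hS hT)

theorem monIdeal_le_wsupported (V : Set (FreeMonoid X)) :
    monIdeal k V ≤ wsupported k {u | ∃ v ∈ V, IsFactor v u} := by
  classical
  refine Submodule.span_le.2 ?_
  rintro _ ⟨a, _, b, ⟨v, hv, rfl⟩, rfl⟩ y hy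
  obtain ⟨p, hp, q, -, rfl⟩ := Finset.mem_mul.1 (MonoidAlgebra.support_coeff_mul_subset _ b hy)
  obtain ⟨r, -, rfl⟩ := Finset.mem_image.1
    (MonoidAlgebra.support_coeff_mul_single_subset a (1 : k) v hp)
  exact ⟨v, hv, r, q, rfl⟩

theorem linearIndependent_mkQ_monIdeal (V : Set (FreeMonoid X)) :
    LinearIndependent k (fun u : {u : FreeMonoid X // ∀ v ∈ V, ¬ IsFactor v u} =>
      (monIdeal k V).mkQ (mono k u.1)) := by
  refine ((MonoidAlgebra.basis (FreeMonoid X) k).linearIndependent.comp _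
    Subtype.val_injective).map ?_
  rw [Submodule.ker_mkQ]
  refine (disjoint_wsupported (S := {u | ∀ v ∈ V, ¬ IsFactor v u}) ?_).mono ?_
    (monIdeal_le_wsupported V)
  · exact Set.disjoint_left.2 fun u hu ⟨v, hv, hvu⟩ => hu v hv hvu
  · exact Submodule.span_le.2 (Set.range_subset_iff.2 fun u => mono_mem_wsupported u.2)

section NormalWords

variable [LinearOrder (FreeMonoid X)] {σ : Type} [AddCommMonoid σ] (e : X → σ)

theorem exists_reduction_mono_mul_lw_mul
    (hmul : ∀ u v w₁ w₂ : FreeMonoid X, u < v → w₁ * u * w₂ < w₁ * v * w₂)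
    {𝔟 : Submodule k (FA k X)} (h𝔟 : IsTwoSided 𝔟) {f : FA k X} (hf : f ∈ 𝔟) (hf0 : f ≠ 0)
    {γ : σ} (hfhom : IsHomog e γ f) (w₁ w₂ : FreeMonoid X) :
    ∃ q ∈ wsupported k {y | y < w₁ * lw f * w₂ ∧ mdeg e y = mdeg e (w₁ * lw f * w₂)},
      𝔟.mkQ (mono k (w₁ * lw f * w₂)) = 𝔟.mkQ q := by
  classical
  set x := w₁ * lw f * w₂
  set c := f.coeff (lw f)
  have hc : c ≠ 0 := Finsupp.mem_support_iff.1 (lw_mem_support hf0)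
  set p := mono k w₁ * f * mono k w₂
  have hp : p ∈ 𝔟 := (h𝔟 _ _ (h𝔟 _ _ hf).1).2
  refine ⟨mono k x - c⁻¹ • p, ?_, ?_⟩
  · intro y hy
    have hy0 : (mono k x - c⁻¹ • p).coeff y ≠ 0 := Finsupp.mem_support_iff.1 hy
    have hyx : y ≠ x := by
      rintro rfl
      simp [p, x, c, mono_eq_single, hc] at hy0
    have hpy : y ∈ p.coeff.support := by
      refine Finsupp.mem_support_iff.2 fun h0 => hy0 ?_
      simp [h0, mono_eq_single, Finsupp.single_eq_of_ne hyx]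
    obtain ⟨z, hz, rfl⟩ := Finset.mem_image.1 (support_coeff_mono_mul_mul_subset f w₁ w₂ hpy)
    have hzlt : z < lw f := (le_lw hz).lt_of_ne (by rintro rfl; exact hyx rfl)
    refine ⟨hmul _ _ _ _ hzlt, ?_⟩
    simp only [x, mdeg_mul, hfhom z hz, hfhom _ (lw_mem_support hf0)]
  · rw [map_sub, map_smul, show 𝔟.mkQ p = 0 from (Submodule.Quotient.mk_eq_zero 𝔟).2 hp,
      smul_zero, sub_zero]

variable {𝔟 : Submodule k (FA k X)} {G : Set (FA k X)}

theorem mkQ_mono_mem_span_nw (hadm : IsAdmissible X) (h𝔟 : IsTwoSided 𝔟)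
    (hG𝔟 : ∀ g ∈ G, g ∈ 𝔟) (hGhom : ∀ g ∈ G, ∃ γ, IsHomog e γ g) {β : σ} {u : FreeMonoid X}
    (hu : mdeg e u = β) :
    𝔟.mkQ (mono k u) ∈ Submodule.span k
      (Set.range fun v : {v : FreeMonoid X // v ∈ nw G ∧ mdeg e v = β} => 𝔟.mkQ (mono k v.1)) := by
  have := hadm.1
  induction u using WellFoundedLT.induction with
  | ind u ih =>
    by_cases hnw : u ∈ nw G
    · exact Submodule.subset_span ⟨⟨u, hnw, hu⟩, rfl⟩
    obtain ⟨_, ⟨g, hgG, hg0, rfl⟩, w₁, w₂, rfl⟩ : ∃ v ∈ lwSet G, IsFactor v u := by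
      simpa [nw] using hnw
    obtain ⟨γ, hγ⟩ := hGhom g hgG
    obtain ⟨q, hq, hmkQ⟩ :=
      exists_reduction_mono_mul_lw_mul e hadm.2.2 h𝔟 (hG𝔟 g hgG) hg0 hγ w₁ w₂
    rw [hmkQ]
    refine (map_wsupported_le_iff _ _ _).2 (fun y hy => ?_) (Submodule.mem_map_of_mem hq)
    exact ih y hy.1 (hy.2.trans hu)

theorem span_mkQ_nw_eq_map_wsupported (hadm : IsAdmissible X) (h𝔟 : IsTwoSided 𝔟)
    (hG𝔟 : ∀ g ∈ G, g ∈ 𝔟) (hGhom : ∀ g ∈ G, ∃ γ, IsHomog e γ g) (β : σ) :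
    Submodule.span k
        (Set.range fun u : {u : FreeMonoid X // u ∈ nw G ∧ mdeg e u = β} => 𝔟.mkQ (mono k u.1)) =
      (wsupported k {u | mdeg e u = β}).map 𝔟.mkQ := by
  refine le_antisymm ?_ ((map_wsupported_le_iff _ _ _).2 fun u hu =>
    mkQ_mono_mem_span_nw e hadm h𝔟 hG𝔟 hGhom hu)
  refine Submodule.span_le.2 (Set.range_subset_iff.2 fun u => ?_)
  exact Submodule.mem_map_of_mem (mono_mem_wsupported u.2.2)

theorem hilb_monIdeal_lwSet_eq_card (hadm : IsAdmissible X) (G : Set (FA k X)) (β : σ)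
    [Fintype {u : FreeMonoid X // u ∈ nw G ∧ mdeg e u = β}] :
    hilb e (monIdeal k (lwSet G)) β =
      Fintype.card {u : FreeMonoid X // u ∈ nw G ∧ mdeg e u = β} := by
  -- `R` is the quotient by the ideal generated by the homogeneous set `mono '' lwSet G`,
  -- whose leading words are those of `G`.
  have hmem : ∀ g ∈ (mono k ·) '' lwSet G, g ∈ monIdeal k (lwSet G) := by
    rintro _ ⟨v, hv, rfl⟩
    exact Submodule.subset_span ⟨1, mono k v, 1, ⟨v, hv, rfl⟩, by simp⟩
  have hhom : ∀ g ∈ (mono k ·) '' lwSet G, ∃ γ, IsHomog e γ g := by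
    rintro _ ⟨v, -, rfl⟩
    exact ⟨mdeg e v, isHomog_mono e v⟩
  have hspan := span_mkQ_nw_eq_map_wsupported (𝔟 := monIdeal k (lwSet G)) e hadm
    (isTwoSided_ideal2 _) hmem hhom β
  rw [show nw ((mono k ·) '' lwSet G) = nw G by simp only [nw, lwSet_image_mono]] at hspan
  rw [hilb, hilbS, ← hspan, finrank_span_eq_card]
  exact (linearIndependent_mkQ_monIdeal (lwSet G)).comp
    (fun u : {u // u ∈ nw G ∧ mdeg e u = β} => (⟨u.1, u.2.1⟩ : {u // u ∈ nw G}))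
    fun _ _ h => Subtype.ext (Subtype.mk.inj h)

end NormalWords

end NC2

/-- for a homogeneous set `G ⊆ 𝔞` and `R = k⟨X⟩/(lw(G))`, and any
`α ∈ ℕ^s`: the images of the normal words of degree `β` modulo `G` form a `k`-basis of
`A_β` for every `β ≤ α` if and only if `dim_k A_β = dim_k R_β` for every `β ≤ α`. -/
theorem stmt_2 (k X : Type) [Field k] [Finite X] [LinearOrder (FreeMonoid X)]
    (hadm : NC.IsAdmissible X) (s : ℕ) (e : X → Fin s → ℕ) (he : ∀ x, e x ≠ 0)
    (𝔞 : Submodule k (NC.FA k X)) (hh : NC2.IsHomogIdeal e 𝔞)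
    (G : Set (NC.FA k X)) (hGsub : ∀ g ∈ G, g ∈ 𝔞)
    (hGhom : ∀ g ∈ G, ∃ α, NC2.IsHomog e α g)
    (α : Fin s → ℕ) :
    (∀ β ≤ α,
        LinearIndependent k
          (fun u : {u : FreeMonoid X // u ∈ NC.nw G ∧ NC2.mdeg e u = β} =>
            𝔞.mkQ (NC.mono k u.1)) ∧
        Submodule.span k
            (Set.range (fun u : {u : FreeMonoid X // u ∈ NC.nw G ∧ NC2.mdeg e u = β} =>
              𝔞.mkQ (NC.mono k u.1))) =
          (NC2.wsupported k {u | NC2.mdeg e u = β}).map 𝔞.mkQ) ↔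
    (∀ β ≤ α, NC2.hilb e 𝔞 β = NC2.hilb e (NC2.monIdeal k (NC.lwSet G)) β) := by
  have hfin (β : Fin s → ℕ) : Fintype {u : FreeMonoid X // u ∈ NC.nw G ∧ NC2.mdeg e u = β} :=
    ((NC2.finite_setOf_mdeg_eq e he β).subset fun _ hu => hu.2).fintype
  have hspan := NC2.span_mkQ_nw_eq_map_wsupported e hadm hh.1 hGsub hGhom
  refine forall₂_congr fun β _ => ?_
  rw [and_iff_left (hspan β), NC2.hilb_monIdeal_lwSet_eq_card e hadm G β, NC2.hilb, NC2.hilbS,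
    ← hspan β, linearIndependent_iff_card_eq_finrank_span, Set.finrank, eq_comm]
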